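/- Let N, l, m be positive integers with l ≤ N − 1, N ≠ 2l and 1 ≤ m ≤ N. Then for any real number K with K > √N/2, E[exp((Ũ_l(m,N))²/K²)] ≤ 1 + 8eNK²/(4K² − N)². -/

import Mathlib

/-!
The coefficients `cos (2π n l / N)` sum to zero (a geometric sum of a nontrivial `N`-th root of
unity) and, because `N ∤ 2l`, their squares sum to `N / 2`. Since the `B n` have a common mean, `U`
is therefore a weighted sum of the centred variables `B n - E[B n]`, and Hoeffding's lemma makes it
sub-Gaussian with variance proxy `∑ cos² / 4 = N / 8`. The two-sided Chernoff bound gives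
`P(exp (U² / K²) > t) ≤ 2 t ^ (-4K² / N)`, and integrating this tail (layer cake) yields
`E[exp (U² / K²)] ≤ 1 + 2N / (4K² - N)`, which is at most the stated bound.
-/

open MeasureTheory ProbabilityTheory Finset Real
open scoped NNReal ENNReal

lemma Finset.sum_Icc_one_eq_sum_fin {M : Type*} [AddCommMonoid M] (N : ℕ) (f : ℕ → M) :
    ∑ n ∈ Icc 1 N, f n = ∑ i : Fin N, f (i + 1) := by
  rw [← Ico_add_one_right_eq_Icc, sum_Ico_eq_sum_range,
    Fin.sum_univ_eq_sum_range (fun i => f (i + 1))]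
  simp only [Nat.add_sub_cancel, add_comm 1]

lemma sum_cos_two_pi_mul_div_eq_zero {N j : ℕ} (hN : 0 < N) (hj : ¬ N ∣ j) :
    ∑ n ∈ Icc 1 N, cos (2 * π * n * j / N) = 0 := by
  set x : ℂ := Complex.exp (2 * π * Complex.I / N) ^ j
  have hroot := Complex.isPrimitiveRoot_exp N hN.ne'
  have hx1 : x ≠ 1 := fun h => hj (hroot.pow_eq_one_iff_dvd j |>.mp h)
  have hxN : x ^ N = 1 := by rw [pow_right_comm, hroot.pow_eq_one, one_pow]
  have hre (n : ℕ) : (x ^ n).re = cos (2 * π * n * j / N) := by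
    rw [← pow_mul, ← Complex.exp_nat_mul, ← Complex.exp_ofReal_mul_I_re]
    congr 2
    push_cast
    ring
  have hgeom : ∑ n ∈ range N, x ^ n = 0 := by
    rw [geom_sum_eq hx1, hxN, sub_self, zero_div]
  calc ∑ n ∈ Icc 1 N, cos (2 * π * n * j / N) = (∑ n ∈ Icc 1 N, x ^ n).re := by
        simp only [Complex.re_sum, hre]
    _ = 0 := by
        rw [sum_Icc_one_eq_sum_fin, Fin.sum_univ_eq_sum_range (fun i => x ^ (i + 1))]
        simp only [pow_succ, ← sum_mul, hgeom, zero_mul, Complex.zero_re]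

lemma Nat.not_dvd_two_mul_of_lt {N l : ℕ} (hl : 0 < l) (hlN : l < N) (hNl : N ≠ 2 * l) :
    ¬ N ∣ 2 * l := by
  rintro ⟨k, hk⟩
  rcases Nat.lt_or_ge k 2 with hk2 | hk2
  · interval_cases k <;> omega
  · have := Nat.mul_le_mul_left N hk2
    omega

lemma sum_cos_sq_two_pi_mul_div {N j : ℕ} (hN : 0 < N) (hj : ¬ N ∣ 2 * j) :
    ∑ n ∈ Icc 1 N, cos (2 * π * n * j / N) ^ 2 = N / 2 := by
  have hdouble (n : ℕ) :
      cos (2 * π * n * j / N) ^ 2 = 1 / 2 + cos (2 * π * n * ↑(2 * j) / N) / 2 := by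
    rw [cos_sq]
    push_cast
    ring_nf
  simp only [hdouble, sum_add_distrib, ← sum_div, sum_cos_two_pi_mul_div_eq_zero hN hj]
  simp

section Probability

variable {Ω : Type*} [MeasurableSpace Ω] {μ : Measure Ω} {X : Ω → ℝ}

lemma ae_eq_zero_or_eq_one_of_measure_eq [IsProbabilityMeasure μ] (hX : Measurable X)
    {q : ℝ≥0∞} (h1 : μ {ω | X ω = 1} = q) (h0 : μ {ω | X ω = 0} = 1 - q) :
    ∀ᵐ ω ∂μ, X ω = 0 ∨ X ω = 1 := by
  have hq : q ≤ 1 := h1 ▸ prob_le_one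
  have hdisj : Disjoint {ω | X ω = 0} {ω | X ω = 1} :=
    Set.disjoint_left.mpr fun ω h0 h1 => by simp_all
  rw [ae_iff_measure_eq (by measurability), Set.ofPred_or,
    measure_union hdisj (hX (measurableSet_singleton 1)), h0, h1, tsub_add_cancel_of_le hq,
    measure_univ]

lemma integral_eq_measureReal_of_ae_eq_zero_or_eq_one (hX : Measurable X)
    (h : ∀ᵐ ω ∂μ, X ω = 0 ∨ X ω = 1) : μ[X] = μ.real {ω | X ω = 1} := by
  have hind : X =ᵐ[μ] {ω | X ω = 1}.indicator 1 := by
    filter_upwards [h] with ω hω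
    rcases hω with h0 | h1 <;> simp [*]
  rw [integral_congr_ae hind]
  exact integral_indicator_one (hX (measurableSet_singleton 1))

lemma hasSubgaussianMGF_sum_mul_sub_integral [IsProbabilityMeasure μ] {ι : Type*}
    {X : ι → Ω → ℝ} (h_indep : iIndepFun X μ) (hX : ∀ i, Measurable (X i))
    (hX01 : ∀ i, ∀ᵐ ω ∂μ, X i ω ∈ Set.Icc 0 1) (c : ι → ℝ) (s : Finset ι) :
    HasSubgaussianMGF (fun ω => ∑ i ∈ s, c i * (X i ω - μ[X i]))
      ((∑ i ∈ s, ‖c i‖₊ ^ 2) / 4) μ := by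
  have hterm (i : ι) :
      HasSubgaussianMGF (fun ω => c i * (X i ω - μ[X i])) (‖c i‖₊ ^ 2 / 4) μ := by
    convert (hasSubgaussianMGF_of_mem_Icc (hX i).aemeasurable (hX01 i)).const_mul (c i) using 1
    ext
    change _ = c i ^ 2 * ((‖(1 : ℝ) - 0‖₊ / 2) ^ 2 : ℝ≥0)
    simp only [NNReal.coe_div, NNReal.coe_pow, coe_nnnorm, norm_eq_abs, sq_abs, NNReal.coe_ofNat,
      sub_zero, nnnorm_one, NNReal.coe_one]
    ring
  have h_indep' : iIndepFun (fun i ω => c i * (X i ω - μ[X i])) μ := by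
    exact h_indep.comp (fun i x => c i * (x - μ[X i])) fun i => by fun_prop
  simpa [sum_div] using HasSubgaussianMGF.sum_of_iIndepFun h_indep' (fun i _ => hterm i) (s := s)

lemma hasSubgaussianMGF_sum_mul_of_measure_eq [IsProbabilityMeasure μ] {ι : Type*}
    {X : ι → Ω → ℝ} (h_indep : iIndepFun X μ) (hX : ∀ i, Measurable (X i)) {q : ℝ≥0∞}
    (h1 : ∀ i, μ {ω | X i ω = 1} = q) (h0 : ∀ i, μ {ω | X i ω = 0} = 1 - q) {c : ι → ℝ}
    {s : Finset ι} (hc : ∑ i ∈ s, c i = 0) :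
    HasSubgaussianMGF (fun ω => ∑ i ∈ s, c i * X i ω) ((∑ i ∈ s, ‖c i‖₊ ^ 2) / 4) μ := by
  have h01 (i : ι) := ae_eq_zero_or_eq_one_of_measure_eq (hX i) (h1 i) (h0 i)
  have hmean (i : ι) : μ[X i] = q.toReal := by
    rw [integral_eq_measureReal_of_ae_eq_zero_or_eq_one (hX i) (h01 i), measureReal_def, h1]
  have h := hasSubgaussianMGF_sum_mul_sub_integral h_indep hX
    (fun i => (h01 i).mono fun ω hω => by rcases hω with h | h <;> simp [h]) c s
  convert h using 2 with ω
  simp only [hmean, mul_sub, sum_sub_distrib, ← sum_mul, hc, zero_mul, sub_zero]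

lemma integral_Ioi_one_const_mul_rpow_neg {C α : ℝ} (hα : 1 < α) :
    ∫ t in Set.Ioi (1 : ℝ), C * t ^ (-α) = C / (α - 1) := by
  have hα' : -α + 1 = -(α - 1) := by ring
  rw [integral_const_mul, integral_Ioi_rpow_of_lt (by linarith) zero_lt_one, one_rpow, hα',
    div_neg, neg_div, neg_neg, mul_one_div]

lemma integral_le_one_add_of_measureReal_lt_le [IsProbabilityMeasure μ] {f : Ω → ℝ}
    (hf_nn : ∀ ω, 0 ≤ f ω) (hf : AEMeasurable f μ) {C α : ℝ} (hC : 0 ≤ C) (hα : 1 < α)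
    (htail : ∀ t, 1 < t → μ.real {ω | t < f ω} ≤ C * t ^ (-α)) :
    ∫ ω, f ω ∂μ ≤ 1 + C / (α - 1) := by
  have hnn : 0 ≤ᵐ[μ] f := ae_of_all _ hf_nn
  have hbound_nn (t : ℝ) (ht : t ∈ Set.Ioi 1) : 0 ≤ C * t ^ (-α) :=
    mul_nonneg hC (rpow_nonneg (zero_le_one.trans (le_of_lt ht)) _)
  have hint : IntegrableOn (fun t : ℝ => C * t ^ (-α)) (Set.Ioi 1) :=
    (integrableOn_Ioi_rpow_of_lt (by linarith) zero_lt_one).const_mul C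
  have hlow : ∫⁻ t in Set.Ioc 0 1, μ {ω | t < f ω} ≤ 1 := calc
    _ ≤ ∫⁻ _ in Set.Ioc (0 : ℝ) 1, 1 := lintegral_mono fun _ => prob_le_one
    _ = 1 := by simp
  have hhigh : ∫⁻ t in Set.Ioi 1, μ {ω | t < f ω} ≤ ENNReal.ofReal (C / (α - 1)) := calc
    _ ≤ ∫⁻ t in Set.Ioi 1, ENNReal.ofReal (C * t ^ (-α)) :=
        setLIntegral_mono' measurableSet_Ioi fun t ht =>
          (ENNReal.le_ofReal_iff_toReal_le (measure_ne_top _ _) (hbound_nn t ht)).mpr (htail t ht)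
    _ = ENNReal.ofReal (C / (α - 1)) := by
        rw [← integral_Ioi_one_const_mul_rpow_neg hα, ofReal_integral_eq_lintegral_ofReal hint]
        exact (ae_restrict_iff' measurableSet_Ioi).mpr (ae_of_all _ hbound_nn)
  rw [integral_eq_lintegral_of_nonneg_ae hnn hf.aestronglyMeasurable,
    lintegral_eq_lintegral_meas_lt μ hnn hf, ← Set.Ioc_union_Ioi_eq_Ioi zero_le_one,
    lintegral_union measurableSet_Ioi (Set.Ioc_disjoint_Ioi le_rfl)]
  refine ENNReal.toReal_le_of_le_ofReal (by positivity) ?_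
  rw [ENNReal.ofReal_add zero_le_one (by positivity), ENNReal.ofReal_one]
  exact add_le_add hlow hhigh

lemma one_add_div_le_one_add_exp_one_mul_div_sq {x K : ℝ} (hx : 0 < x) (hK : x < 4 * K ^ 2) :
    1 + 4 * (x / 8) / (K ^ 2 - 2 * (x / 8)) ≤ 1 + 8 * exp 1 * x * K ^ 2 / (4 * K ^ 2 - x) ^ 2 := by
  have hD : 0 < 4 * K ^ 2 - x := by linarith
  have hsimp : 4 * (x / 8) / (K ^ 2 - 2 * (x / 8)) = 2 * x / (4 * K ^ 2 - x) := by
    rw [div_eq_div_iff (by linarith) hD.ne']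
    ring
  have he : 4 * K ^ 2 - x ≤ 4 * exp 1 * K ^ 2 := by
    nlinarith [one_le_exp zero_le_one, sq_nonneg K]
  rw [hsimp, add_le_add_iff_left, div_le_div_iff₀ hD (by positivity)]
  nlinarith [mul_le_mul_of_nonneg_left he (mul_pos hx hD).le]

namespace ProbabilityTheory.HasSubgaussianMGF

lemma measureReal_abs_ge_le {c : ℝ≥0} (h : HasSubgaussianMGF X c μ) {ε : ℝ} (hε : 0 ≤ ε) :
    μ.real {ω | ε ≤ |X ω|} ≤ 2 * exp (-ε ^ 2 / (2 * c)) := by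
  have hsplit : {ω | ε ≤ |X ω|} = {ω | ε ≤ X ω} ∪ {ω | ε ≤ (-X) ω} := by
    ext ω
    simp [le_abs]
  rw [hsplit, two_mul]
  exact (measureReal_union_le _ _).trans
    (add_le_add (h.measure_ge_le hε) (h.neg.measure_ge_le hε))

lemma integral_exp_sq_div_sq_le [IsProbabilityMeasure μ] {c : ℝ≥0}
    (h : HasSubgaussianMGF X c μ) (hc : 0 < c) {K : ℝ} (hK : 2 * c < K ^ 2) :
    ∫ ω, exp (X ω ^ 2 / K ^ 2) ∂μ ≤ 1 + 4 * c / (K ^ 2 - 2 * c) := by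
  have hc' : (0 : ℝ) < c := hc
  have hK0 : 0 < K ^ 2 := by linarith
  set α : ℝ := K ^ 2 / (2 * c)
  have hα : 1 < α := (one_lt_div (by positivity)).mpr hK
  have htail (t : ℝ) (ht : 1 < t) : μ.real {ω | t < exp (X ω ^ 2 / K ^ 2)} ≤ 2 * t ^ (-α) := by
    have ht0 : 0 < t := zero_lt_one.trans ht
    have hlog : 0 ≤ log t := log_nonneg ht.le
    set ε := √(K ^ 2 * log t)
    have hsub : {ω | t < exp (X ω ^ 2 / K ^ 2)} ⊆ {ω | ε ≤ |X ω|} := fun ω hω => by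
      have : K ^ 2 * log t < X ω ^ 2 := by
        rw [Set.mem_ofPred_eq, ← log_lt_iff_lt_exp ht0, lt_div_iff₀ hK0] at hω
        linarith
      rw [Set.mem_ofPred_eq, ← sqrt_sq_eq_abs]
      exact sqrt_le_sqrt this.le
    have hexp : exp (-ε ^ 2 / (2 * c)) = t ^ (-α) := by
      rw [sq_sqrt (by positivity), rpow_def_of_pos ht0]
      congr 1
      ring
    calc μ.real {ω | t < exp (X ω ^ 2 / K ^ 2)} ≤ μ.real {ω | ε ≤ |X ω|} := measureReal_mono hsub
      _ ≤ 2 * t ^ (-α) := hexp ▸ h.measureReal_abs_ge_le (sqrt_nonneg _)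
  calc ∫ ω, exp (X ω ^ 2 / K ^ 2) ∂μ ≤ 1 + 2 / (α - 1) :=
        integral_le_one_add_of_measureReal_lt_le (fun _ => (exp_pos _).le)
          (h.aemeasurable.pow_const 2 |>.div_const _ |>.exp) zero_le_two hα htail
    _ = 1 + 4 * c / (K ^ 2 - 2 * c) := by
        have hα1 : α - 1 = (K ^ 2 - 2 * c) / (2 * c) := by
          simp only [α]
          field_simp
        rw [hα1, div_div_eq_mul_div]
        ring

end ProbabilityTheory.HasSubgaussianMGF

end Probability

theorem stmt_9_general
    {Ω : Type*} [MeasurableSpace Ω] (P : Measure Ω) [IsProbabilityMeasure P]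
    (N l m : ℕ) (hN : 0 < N) (hl : 0 < l) (hlN : l ≤ N - 1) (hNl : N ≠ 2 * l)
    (B : ℕ → Ω → ℝ) (hBmeas : ∀ n, Measurable (B n))
    (hBindep : iIndepFun (fun i : Fin N => B (i.1 + 1)) P)
    (hB1 : ∀ n ∈ Finset.Icc 1 N, P {ω | B n ω = 1} = (m : ENNReal) / N)
    (hB0 : ∀ n ∈ Finset.Icc 1 N, P {ω | B n ω = 0} = 1 - (m : ENNReal) / N)
    (U : Ω → ℝ)
    (hU : U = fun ω => ∑ n ∈ Finset.Icc 1 N, Real.cos (2 * Real.pi * n * l / N) * B n ω) :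
    ∀ K : ℝ, Real.sqrt N / 2 < K →
      (∫ ω, Real.exp ((U ω) ^ 2 / K ^ 2) ∂P)
        ≤ 1 + 8 * Real.exp 1 * N * K ^ 2 / (4 * K ^ 2 - N) ^ 2 := by
  intro K hK
  set c : ℕ → ℝ := fun n => cos (2 * π * n * l / N)
  have hmem (i : Fin N) : (i : ℕ) + 1 ∈ Icc 1 N := mem_Icc.mpr ⟨by omega, i.2⟩
  have hsum : ∑ i : Fin N, c (i + 1) = 0 := by
    rw [← sum_Icc_one_eq_sum_fin]
    exact sum_cos_two_pi_mul_div_eq_zero hN (Nat.not_dvd_of_pos_of_lt hl (by omega))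
  have hsq : ∑ i : Fin N, c (i + 1) ^ 2 = N / 2 := by
    rw [← sum_Icc_one_eq_sum_fin N (fun n => c n ^ 2)]
    exact sum_cos_sq_two_pi_mul_div hN (Nat.not_dvd_two_mul_of_lt hl (by omega) hNl)
  have hsub : HasSubgaussianMGF U ((∑ i : Fin N, ‖c (i + 1)‖₊ ^ 2) / 4) P := by
    rw [hU]
    simp only [sum_Icc_one_eq_sum_fin]
    exact hasSubgaussianMGF_sum_mul_of_measure_eq hBindep (fun _ => hBmeas _)
      (fun i => hB1 _ (hmem i)) (fun i => hB0 _ (hmem i)) hsum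
  have hvar : (((∑ i : Fin N, ‖c (i + 1)‖₊ ^ 2) / 4 : ℝ≥0) : ℝ) = N / 8 := by
    simp only [NNReal.coe_div, NNReal.coe_sum, NNReal.coe_pow, coe_nnnorm, norm_eq_abs, sq_abs,
      NNReal.coe_ofNat, hsq]
    ring
  have hN' : (0 : ℝ) < N := by exact_mod_cast hN
  have hK2 : (N : ℝ) < 4 * K ^ 2 := by
    have := sq_sqrt hN'.le
    nlinarith [sqrt_nonneg (N : ℝ)]
  have h := hsub.integral_exp_sq_div_sq_le (K := K) (by rw [← NNReal.coe_pos, hvar]; positivity)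
    (by rw [hvar]; linarith)
  rw [hvar] at h
  exact h.trans (one_add_div_le_one_add_exp_one_mul_div_sq hN' hK2)

theorem stmt_9
    {Ω : Type*} [MeasurableSpace Ω] (P : Measure Ω) [IsProbabilityMeasure P]
    (N l m : ℕ) (hN : 0 < N) (hl : 0 < l) (hlN : l ≤ N - 1) (hNl : N ≠ 2 * l) (hm : 1 ≤ m)
    (hmN : m ≤ N)
    (B : ℕ → Ω → ℝ) (hBmeas : ∀ n, Measurable (B n))
    (hBindep : iIndepFun (fun i : Fin N => B (i.1 + 1)) P)
    (hB1 : ∀ n ∈ Finset.Icc 1 N, P {ω | B n ω = 1} = (m : ENNReal) / N)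
    (hB0 : ∀ n ∈ Finset.Icc 1 N, P {ω | B n ω = 0} = 1 - (m : ENNReal) / N)
    (U : Ω → ℝ)
    (hU : U = fun ω => ∑ n ∈ Finset.Icc 1 N, Real.cos (2 * Real.pi * n * l / N) * B n ω) :
    ∀ K : ℝ, Real.sqrt N / 2 < K →
      (∫ ω, Real.exp ((U ω) ^ 2 / K ^ 2) ∂P)
        ≤ 1 + 8 * Real.exp 1 * N * K ^ 2 / (4 * K ^ 2 - N) ^ 2 :=
  stmt_9_general P N l m hN hl hlN hNl B hBmeas hBindep hB1 hB0 U hU
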